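/- arXiv:math/9902096 — 2 statements merged into one kernel-verified Lean document; each statement's English description precedes it below -/
import Mathlib

section
/- Let A be an associative unital R-algebra with a cell datum (Λ, M, C, *, r) of profinite type, and let Â be the associated procellular algebra. Then the canonical map ι : A → ∏_{P∈Π} A_P given by ι(a) = (ψ_P(a))_{P∈Π} takes values in Â, is an injective algebra homomorphism, and has dense image in the following sense: for every element â = (â_P)_{P∈Π} of Â and every finite coideal P ∈ Π, there exists a ∈ A with ψ_P(a) = â_P (i.e. â − ι(a) lies in the kernel Î_P of the projection Â → A_P). -/
open scoped BigOperators

/-- A cell datum `(Λ, M, C, *, r)` for an associative unital `R`-algebra `A`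
(Graham–Lehrer).  `basis`/`basis_eq` say that `C` has image an `R`-basis of `A`,
`inj` says `C` is injective, `star` is the `R`-linear involutory anti-automorphism with
`(C_{S,T})* = C_{T,S}`, and `mul_C` is the multiplication axiom modulo `A(<λ)`. -/
structure CellDatum (R : Type*) [CommRing R] (A : Type*) [Ring A] [Algebra R A]
    (Λ : Type*) [PartialOrder Λ] (M : Λ → Type*) [∀ l, Fintype (M l)] where
  C : ∀ l : Λ, M l → M l → A
  inj : Function.Injective fun p : Σ l : Λ, M l × M l => C p.1 p.2.1 p.2.2
  basis : Module.Basis (Σ l : Λ, M l × M l) R A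
  basis_eq : ∀ p : Σ l : Λ, M l × M l, basis p = C p.1 p.2.1 p.2.2
  star : A →ₗ[R] A
  star_star : ∀ a : A, star (star a) = a
  star_mul : ∀ a b : A, star (a * b) = star b * star a
  star_C : ∀ (l : Λ) (S T : M l), star (C l S T) = C l T S
  r : A → ∀ l : Λ, M l → M l → R
  mul_C : ∀ (a : A) (l : Λ) (S T : M l),
    a * C l S T - ∑ S' : M l, r a l S' S • C l S' T ∈
      Submodule.span R {x : A | ∃ μ : Λ, μ < l ∧ ∃ S'' T'' : M μ, x = C μ S'' T''}

variable {R A Λ : Type*} [CommRing R] [Ring A] [Algebra R A] [PartialOrder Λ]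
  {M : Λ → Type*} [∀ l, Fintype (M l)]

/-- `A(<λ)`: the `R`-span of the cell basis elements indexed by `μ < λ`. -/
def CellDatum.Aless (D : CellDatum R A Λ M) (l : Λ) : Submodule R A :=
  Submodule.span R {x : A | ∃ μ : Λ, μ < l ∧ ∃ S'' T'' : M μ, x = D.C μ S'' T''}

/-- A coideal of the poset `Λ`: a subset closed upwards. -/
def IsCoideal {Λ : Type*} [PartialOrder Λ] (P : Set Λ) : Prop :=
  ∀ ⦃a b : Λ⦄, a ∈ P → a < b → b ∈ P

/-- `I_P`: the `R`-span of the cell basis elements `C_{S,T}^λ` with `λ ∉ P`. -/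
def CellDatum.IP (D : CellDatum R A Λ M) (P : Set Λ) : Submodule R A :=
  Submodule.span R {x : A | ∃ l : Λ, l ∉ P ∧ ∃ S T : M l, x = D.C l S T}

/-- `Π`: the set of finite coideals of `Λ`. -/
def FiniteCoideal (Λ : Type*) [PartialOrder Λ] : Type _ :=
  {P : Set Λ // P.Finite ∧ IsCoideal P}

/-- The procellular algebra `Â`, realised inside `∏_{P∈Π} A_P` as the families
`(a_P)_P` such that `ψ_{P₁,P₂}(a_{P₁}) = a_{P₂}` whenever `P₂ ⊆ P₁` (equivalently,
any lift `a ∈ A` of `a_{P₁}` maps to `a_{P₂}` under `ψ_{P₂}`). -/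
def Procellular (D : CellDatum R A Λ M)
    (J : ∀ _ : FiniteCoideal Λ, TwoSidedIdeal A) :
    Set (∀ P : FiniteCoideal Λ, RingCon.Quotient (J P).ringCon) :=
  {x | ∀ P₁ P₂ : FiniteCoideal Λ, P₂.1 ⊆ P₁.1 → ∀ a : A,
    RingCon.mk' (J P₁).ringCon a = x P₁ → RingCon.mk' (J P₂).ringCon a = x P₂}

/-!
The coordinates of an element of `A` in the cell basis are detected by the quotients `A_P`:
the coefficient at `C_{S,T}^λ` survives in `A_P` as soon as `λ ∈ P`, and for a datum of profinite
type the principal coideal `⟨λ⟩` is such a finite coideal. Hence `ι` is injective. The remaining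
assertions hold because each `ψ_P` is a surjective algebra homomorphism and the `I_P` shrink as
`P` grows.
-/

theorem TwoSidedIdeal.mk'_eq_mk'_iff_sub_mem {A : Type*} [Ring A] (I : TwoSidedIdeal A) (a b : A) :
    I.ringCon.mk' a = I.ringCon.mk' b ↔ a - b ∈ I :=
  (RingCon.eq _).trans (I.rel_iff a b)

theorem isCoideal_Ici (a : Λ) : IsCoideal (Set.Ici a) :=
  fun _ _ hx hxy => le_trans hx hxy.le

def FiniteCoideal.Ici (a : Λ) (ha : (Set.Ici a).Finite) : FiniteCoideal Λ :=
  ⟨Set.Ici a, ha, isCoideal_Ici a⟩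

namespace CellDatum

variable (D : CellDatum R A Λ M)

theorem IP_antitone : Antitone D.IP := fun _ _ h =>
  Submodule.span_mono fun _ ⟨l, hl, S, T, hx⟩ => ⟨l, fun hl' => hl (h hl'), S, T, hx⟩

theorem IP_le_span_basis (P : Set Λ) :
    D.IP P ≤ Submodule.span R (D.basis '' {q | q.1 ∉ P}) :=
  Submodule.span_le.2 fun _ ⟨l, hl, S, T, hx⟩ =>
    Submodule.subset_span ⟨⟨l, S, T⟩, hl, hx ▸ D.basis_eq ⟨l, S, T⟩⟩

theorem repr_apply_eq_zero_of_mem_IP {P : Set Λ} {x : A} (hx : x ∈ D.IP P)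
    {p : Σ l : Λ, M l × M l} (hp : p.1 ∈ P) : D.basis.repr x p = 0 := by
  have hsupp := (Module.Basis.mem_span_image D.basis).1 (D.IP_le_span_basis P hx)
  by_contra hne
  exact hsupp (Finsupp.mem_support_iff.2 hne) hp

theorem eq_zero_of_forall_mem_IP (hprofin : ∀ a : Λ, {l : Λ | a ≤ l}.Finite) {x : A}
    (hx : ∀ P : FiniteCoideal Λ, x ∈ D.IP P.1) : x = 0 :=
  D.basis.forall_coord_eq_zero_iff.1 fun p =>
    D.repr_apply_eq_zero_of_mem_IP (hx (FiniteCoideal.Ici p.1 (hprofin p.1))) le_rfl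

end CellDatum

theorem canonical_embedding_dense_general (R A Λ : Type*) [CommRing R] [Ring A] [Algebra R A]
    [PartialOrder Λ] (M : Λ → Type*) [∀ l, Fintype (M l)] (D : CellDatum R A Λ M)
    (hprofin : ∀ a : Λ, {l : Λ | a ≤ l}.Finite)
    (J : ∀ _ : FiniteCoideal Λ, TwoSidedIdeal A)
    (hJ : ∀ (P : FiniteCoideal Λ) (x : A), x ∈ J P ↔ x ∈ D.IP P.1) :
    (∀ a : A, (fun P : FiniteCoideal Λ => RingCon.mk' (J P).ringCon a) ∈
        Procellular D J) ∧
    Function.Injective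
      (fun (a : A) (P : FiniteCoideal Λ) => RingCon.mk' (J P).ringCon a) ∧
    (∀ a b : A, (fun P : FiniteCoideal Λ => RingCon.mk' (J P).ringCon (a + b)) =
        (fun P => RingCon.mk' (J P).ringCon a) + fun P => RingCon.mk' (J P).ringCon b) ∧
    (∀ a b : A, (fun P : FiniteCoideal Λ => RingCon.mk' (J P).ringCon (a * b)) =
        (fun P => RingCon.mk' (J P).ringCon a) * fun P => RingCon.mk' (J P).ringCon b) ∧
    ((fun P : FiniteCoideal Λ => RingCon.mk' (J P).ringCon (1 : A)) = 1) ∧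
    (∀ (c : R) (a : A),
        (fun P : FiniteCoideal Λ => RingCon.mk' (J P).ringCon (c • a)) =
          c • fun P : FiniteCoideal Λ => RingCon.mk' (J P).ringCon a) ∧
    (∀ x ∈ Procellular D J, ∀ P : FiniteCoideal Λ,
        ∃ a : A, RingCon.mk' (J P).ringCon a = x P) := by
  have hψ : ∀ (P : FiniteCoideal Λ) (a b : A),
      RingCon.mk' (J P).ringCon a = RingCon.mk' (J P).ringCon b ↔ a - b ∈ D.IP P.1 :=
    fun P a b => ((J P).mk'_eq_mk'_iff_sub_mem a b).trans (hJ P _)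
  refine ⟨?compatible, ?injective, ?add, ?mul, ?one, ?smul, ?dense⟩
  case compatible =>
    intro a P₁ P₂ hsub b hb
    exact (hψ P₂ b a).2 (D.IP_antitone hsub ((hψ P₁ b a).1 hb))
  case injective =>
    intro a b hab
    exact sub_eq_zero.1 <|
      D.eq_zero_of_forall_mem_IP hprofin fun P => (hψ P a b).1 (congrFun hab P)
  case add => exact fun a b => funext fun P => map_add _ a b
  case mul => exact fun a b => funext fun P => map_mul _ a b
  case one => exact funext fun P => map_one _
  case smul => exact fun c a => funext fun P => RingCon.coe_smul _ c a
  case dense => exact fun x _ P => Quot.exists_rep (x P)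

/-- for a cell datum of profinite type, the canonical map
`ι : A → ∏_{P∈Π} A_P`, `ι(a) = (ψ_P(a))_P`, takes values in `Â`, is an injective algebra
homomorphism, and has dense image: for every `â ∈ Â` and every `P ∈ Π` there is `a ∈ A`
with `ψ_P(a) = â_P`. -/
theorem canonical_embedding_dense (R A Λ : Type*) [CommRing R] [Ring A] [Algebra R A]
    [PartialOrder Λ] (M : Λ → Type*) [∀ l, Fintype (M l)] (D : CellDatum R A Λ M)
    (hinf : Infinite Λ) (hprofin : ∀ a : Λ, {l : Λ | a ≤ l}.Finite)
    (J : ∀ _ : FiniteCoideal Λ, TwoSidedIdeal A)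
    (hJ : ∀ (P : FiniteCoideal Λ) (x : A), x ∈ J P ↔ x ∈ D.IP P.1) :
    (∀ a : A, (fun P : FiniteCoideal Λ => RingCon.mk' (J P).ringCon a) ∈
        Procellular D J) ∧
    Function.Injective
      (fun (a : A) (P : FiniteCoideal Λ) => RingCon.mk' (J P).ringCon a) ∧
    (∀ a b : A, (fun P : FiniteCoideal Λ => RingCon.mk' (J P).ringCon (a + b)) =
        (fun P => RingCon.mk' (J P).ringCon a) + fun P => RingCon.mk' (J P).ringCon b) ∧
    (∀ a b : A, (fun P : FiniteCoideal Λ => RingCon.mk' (J P).ringCon (a * b)) =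
        (fun P => RingCon.mk' (J P).ringCon a) * fun P => RingCon.mk' (J P).ringCon b) ∧
    ((fun P : FiniteCoideal Λ => RingCon.mk' (J P).ringCon (1 : A)) = 1) ∧
    (∀ (c : R) (a : A),
        (fun P : FiniteCoideal Λ => RingCon.mk' (J P).ringCon (c • a)) =
          c • fun P : FiniteCoideal Λ => RingCon.mk' (J P).ringCon a) ∧
    (∀ x ∈ Procellular D J, ∀ P : FiniteCoideal Λ,
        ∃ a : A, RingCon.mk' (J P).ringCon a = x P) :=
  canonical_embedding_dense_general R A Λ M D hprofin J hJ
end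

section
/- Let R be a field and A an associative unital R-algebra with a cell datum (Λ, M, C, *, r). Fix λ ∈ Λ, let W(λ) be the cell representation of A corresponding to λ, and let φ : M(λ) × M(λ) → R satisfy C_{S₁,T₁}^λ · C_{S₂,T₂}^λ − φ(T₁,S₂)·C_{S₁,T₂}^λ ∈ A(<λ) for all S₁,T₁,S₂,T₂ ∈ M(λ); let φ_λ be the bilinear form on W(λ) with φ_λ(C_S, C_T) = φ(S,T). Then the radical rad(λ) := {x ∈ W(λ) : φ_λ(x,y) = 0 for all y ∈ W(λ)} is an A-submodule of W(λ), and if φ is not identically zero then the quotient module W(λ)/rad(λ) is a simple A-module. -/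
open scoped BigOperators

variable {R A Λ : Type*} [CommRing R] [Ring A] [Algebra R A] [PartialOrder Λ]
  {M : Λ → Type*} [∀ l, Fintype (M l)]

/-! Modulo `A(<λ)`, which is a two-sided ideal stable under `*` and modulo which the `C^λ_{S,T}`
stay linearly independent, comparing coefficients in the axioms of the cell datum and in the
defining property of `φ` gives `φ(S,T) = φ(T,S)`, `C_{S,T} • x = φ_λ(x, C_T) C_S` and the
invariance `φ_λ(a x, y) = φ_λ(x, a* y)`; the last one makes `rad(λ)` an `A`-submodule. If
`x ∉ rad(λ)`, then `φ_λ(x, C_T) ≠ 0` for some `T`, so `C_S = φ_λ(x, C_T)⁻¹ C_{S,T} • x` for all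
`S` and `x` generates `W(λ)`. Hence `rad(λ)` is a maximal submodule as soon as it is proper,
and `φ(S,T) ≠ 0` gives `C_S ∉ rad(λ)`. -/

open Matrix

theorem Submodule.isSimpleModule_quotient_of_span_singleton_eq_top {R N : Type*} [Ring R]
    [AddCommGroup N] [Module R N] {p : Submodule R N} (hp : p ≠ ⊤)
    (h : ∀ x ∉ p, span R {x} = ⊤) : IsSimpleModule R (N ⧸ p) := by
  rw [isSimpleModule_iff_isCoatom]
  refine ⟨hp, fun q hpq => ?_⟩
  obtain ⟨x, hxq, hxp⟩ := SetLike.exists_of_lt hpq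
  rw [eq_top_iff, ← h x hxp, span_le]
  simpa using hxq

namespace CellDatum

section Ideal

variable (D : CellDatum R A Λ M) {l : Λ}

theorem C_eq_basis (S T : M l) : D.C l S T = D.basis ⟨l, S, T⟩ :=
  (D.basis_eq ⟨l, S, T⟩).symm

theorem Aless_mono {μ : Λ} (h : μ < l) : D.Aless μ ≤ D.Aless l :=
  Submodule.span_mono fun _ ⟨ν, hν, hx⟩ => ⟨ν, hν.trans h, hx⟩

theorem mul_mem_Aless_left (a : A) {x : A} (hx : x ∈ D.Aless l) : a * x ∈ D.Aless l := by
  induction hx using Submodule.span_induction with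
  | mem y hy =>
    obtain ⟨μ, hμ, S, T, rfl⟩ := hy
    have hsum : ∑ S', D.r a μ S' S • D.C μ S' T ∈ D.Aless l := Submodule.sum_mem _ fun S' _ =>
      Submodule.smul_mem _ _ (Submodule.subset_span ⟨μ, hμ, S', T, rfl⟩)
    simpa using Submodule.add_mem _ (D.Aless_mono hμ (D.mul_C a μ S T)) hsum
  | zero => simp
  | add x y _ _ hx hy => simpa [mul_add] using Submodule.add_mem _ hx hy
  | smul c x _ hx => simpa [mul_smul_comm] using Submodule.smul_mem _ c hx

theorem star_mem_Aless {x : A} (hx : x ∈ D.Aless l) : D.star x ∈ D.Aless l := by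
  refine (Submodule.span_le.2 ?_ : D.Aless l ≤ (D.Aless l).comap D.star) hx
  rintro _ ⟨μ, hμ, S, T, rfl⟩
  exact Submodule.subset_span ⟨μ, hμ, T, S, D.star_C μ S T⟩

theorem mul_mem_Aless_right (a : A) {x : A} (hx : x ∈ D.Aless l) : x * a ∈ D.Aless l := by
  simpa [D.star_mul, D.star_star] using
    D.star_mem_Aless (D.mul_mem_Aless_left (D.star a) (D.star_mem_Aless hx))

theorem repr_eq_zero_of_mem_Aless {x : A} (hx : x ∈ D.Aless l) (S T : M l) :
    D.basis.repr x ⟨l, S, T⟩ = 0 := by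
  refine (Submodule.span_le.2 ?_ : D.Aless l ≤ LinearMap.ker (D.basis.coord ⟨l, S, T⟩)) hx
  rintro _ ⟨μ, hμ, S', T', rfl⟩
  have hne : (⟨μ, S', T'⟩ : Σ l, M l × M l) ≠ ⟨l, S, T⟩ := fun h => hμ.ne (congrArg Sigma.fst h)
  simp [C_eq_basis, hne]

theorem repr_C [DecidableEq (M l)] (S S' T : M l) :
    D.basis.repr (D.C l S T) ⟨l, S', T⟩ = if S = S' then 1 else 0 := by
  classical
  simp [C_eq_basis, Finsupp.single_apply]

end Ideal

section Congruence

variable (D : CellDatum R A Λ M) {l : Λ}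

theorem repr_eq_of_sModEq {x y : A} (h : x ≡ y [SMOD D.Aless l]) (S T : M l) :
    D.basis.repr x ⟨l, S, T⟩ = D.basis.repr y ⟨l, S, T⟩ :=
  sub_eq_zero.1 (by simpa using D.repr_eq_zero_of_mem_Aless (SModEq.sub_mem.1 h) S T)

theorem sModEq_mul_left {x y : A} (h : x ≡ y [SMOD D.Aless l]) (a : A) :
    a * x ≡ a * y [SMOD D.Aless l] :=
  SModEq.sub_mem.2 (by simpa [mul_sub] using D.mul_mem_Aless_left a (SModEq.sub_mem.1 h))

theorem sModEq_mul_right {x y : A} (h : x ≡ y [SMOD D.Aless l]) (a : A) :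
    x * a ≡ y * a [SMOD D.Aless l] :=
  SModEq.sub_mem.2 (by simpa [sub_mul] using D.mul_mem_Aless_right a (SModEq.sub_mem.1 h))

theorem sModEq_star {x y : A} (h : x ≡ y [SMOD D.Aless l]) :
    D.star x ≡ D.star y [SMOD D.Aless l] :=
  SModEq.sub_mem.2 (by simpa using D.star_mem_Aless (SModEq.sub_mem.1 h))

theorem mul_C_sModEq (a : A) (S T : M l) :
    a * D.C l S T ≡ ∑ S', D.r a l S' S • D.C l S' T [SMOD D.Aless l] :=
  SModEq.sub_mem.2 (D.mul_C a l S T)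

theorem C_mul_sModEq (a : A) (S T : M l) :
    D.C l S T * a ≡ ∑ T', D.r (D.star a) l T' T • D.C l S T' [SMOD D.Aless l] := by
  simpa [D.star_mul, D.star_star, D.star_C] using D.sModEq_star (D.mul_C_sModEq (D.star a) T S)

end Congruence

variable {W : Type*} [AddCommGroup W] [Module R W] [Module A W] [IsScalarTower R A W]

def rMatrix (D : CellDatum R A Λ M) (a : A) (l : Λ) : Matrix (M l) (M l) R :=
  of fun S' S => D.r a l S' S

def IsCellForm (D : CellDatum R A Λ M) (l : Λ) (φ : M l → M l → R) : Prop :=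
  ∀ S₁ T₁ S₂ T₂ : M l, D.C l S₁ T₁ * D.C l S₂ T₂ ≡ φ T₁ S₂ • D.C l S₁ T₂ [SMOD D.Aless l]

def IsCellRepresentation (D : CellDatum R A Λ M) (l : Λ) (b : Module.Basis (M l) R W) : Prop :=
  ∀ (a : A) (S : M l), a • b S = ∑ S', D.r a l S' S • b S'

namespace IsCellForm

variable {D : CellDatum R A Λ M} {l : Λ} {φ : M l → M l → R}

theorem symm (hφ : D.IsCellForm l φ) (S T : M l) : φ S T = φ T S := by
  have h := D.sModEq_star (hφ T S T S)
  simp only [D.star_mul, D.star_C, map_smul] at h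
  simpa [C_eq_basis] using D.repr_eq_of_sModEq (h.symm.trans (hφ S T S T)) S T

theorem r_C [DecidableEq (M l)] (hφ : D.IsCellForm l φ) (S T U S' : M l) :
    D.r (D.C l S T) l S' U = if S' = S then φ T U else 0 := by
  have h := (D.mul_C_sModEq (D.C l S T) U U).symm.trans (hφ S T U U)
  simpa [repr_C, eq_comm] using D.repr_eq_of_sModEq h S' U

/-- Both sides are read off from the coefficient of `C_{T,U}` in `C_{T,T} a C_{U,U}`, reduced
through `a C_{U,U}` and through `C_{T,T} a` respectively. -/
theorem of_mul_rMatrix (hφ : D.IsCellForm l φ) (a : A) :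
    of φ * D.rMatrix a l = (D.rMatrix (D.star a) l)ᵀ * of φ := by
  classical
  ext T U
  have left : D.C l T T * (a * D.C l U U) ≡
      ∑ S, D.r a l S U • φ T S • D.C l T U [SMOD D.Aless l] := by
    refine (D.sModEq_mul_left (D.mul_C_sModEq a U U) _).trans ?_
    simp only [Finset.mul_sum, mul_smul_comm]
    exact SModEq.sum fun S _ => (hφ T T S U).smul _
  have right : D.C l T T * a * D.C l U U ≡
      ∑ T', D.r (D.star a) l T' T • φ T' U • D.C l T U [SMOD D.Aless l] := by
    refine (D.sModEq_mul_right (D.C_mul_sModEq a T T) _).trans ?_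
    simp only [Finset.sum_mul, smul_mul_assoc]
    exact SModEq.sum fun T' _ => (hφ T T' U U).smul _
  rw [mul_assoc] at right
  simpa [repr_C, rMatrix, mul_apply, mul_comm] using
    D.repr_eq_of_sModEq (left.symm.trans right) T U

end IsCellForm

namespace IsCellRepresentation

variable {D : CellDatum R A Λ M} {l : Λ} {b : Module.Basis (M l) R W}

theorem repr_smul (hb : D.IsCellRepresentation l b) (a : A) (x : W) :
    ⇑(b.repr (a • x)) = D.rMatrix a l *ᵥ ⇑(b.repr x) := by
  classical
  have hx : a • x = ∑ S, b.repr x S • ∑ S', D.r a l S' S • b S' := by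
    conv_lhs => rw [← b.sum_repr x]
    simp only [Finset.smul_sum, smul_comm a, hb a]
  ext S'
  rw [hx]
  simp [rMatrix, mulVec, dotProduct, Finset.smul_sum, smul_smul, Finsupp.single_apply, mul_comm]

end IsCellRepresentation

section CellRepresentation

variable (D : CellDatum R A Λ M) {l : Λ} {φ : M l → M l → R} (b : Module.Basis (M l) R W)

variable [DecidableEq (M l)]

theorem toBilin_smul_left (hφ : D.IsCellForm l φ) (hb : D.IsCellRepresentation l b)
    (a : A) (x y : W) : toBilin b (of φ) (a • x) y = toBilin b (of φ) x (D.star a • y) := by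
  simp only [LinearMap.BilinForm.apply_eq_dotProduct_toMatrix_mulVec b,
    LinearMap.BilinForm.toMatrix_toBilin, hb.repr_smul]
  conv_rhs => rw [mulVec_mulVec, hφ.of_mul_rMatrix, D.star_star, ← mulVec_mulVec,
    dotProduct_mulVec, vecMul_transpose]

theorem C_smul (hφ : D.IsCellForm l φ) (hb : D.IsCellRepresentation l b) (S T : M l) (x : W) :
    D.C l S T • x = toBilin b (of φ) x (b T) • b S := by
  refine b.repr.injective (Finsupp.ext fun S' => ?_)
  simp only [congrFun (hb.repr_smul (D.C l S T) x) S', rMatrix, hφ.r_C]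
  simp [mulVec, dotProduct, Finsupp.single_apply, hφ.symm T, eq_comm, mul_comm]

theorem span_singleton_eq_top_of_isUnit (hφ : D.IsCellForm l φ)
    (hb : D.IsCellRepresentation l b) {x : W} {T : M l}
    (hT : IsUnit (toBilin b (of φ) x (b T))) : Submodule.span A {x} = ⊤ := by
  have hbasis : ∀ S, b S ∈ Submodule.span A {x} := fun S => by
    have hS : b S = (hT.unit⁻¹.val • D.C l S T) • x := by
      rw [smul_assoc, D.C_smul b hφ hb, smul_smul, IsUnit.val_inv_mul, one_smul]
    rw [hS]
    exact Submodule.smul_mem _ _ (Submodule.mem_span_singleton_self x)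
  rw [← Submodule.restrictScalars_eq_top_iff R, eq_top_iff, ← b.span_eq, Submodule.span_le]
  rintro _ ⟨S, rfl⟩
  exact hbasis S

def radical (hφ : D.IsCellForm l φ) (hb : D.IsCellRepresentation l b) : Submodule A W where
  carrier := {x | ∀ y, toBilin b (of φ) x y = 0}
  add_mem' hx hy z := by simp [hx z, hy z]
  zero_mem' := by simp
  smul_mem' a x hx y := by rw [D.toBilin_smul_left b hφ hb]; exact hx _

variable {hφ : D.IsCellForm l φ} {hb : D.IsCellRepresentation l b}

theorem mem_radical {x : W} : x ∈ D.radical b hφ hb ↔ ∀ y, toBilin b (of φ) x y = 0 :=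
  Iff.rfl

theorem radical_ne_top (hφ₀ : φ ≠ 0) : D.radical b hφ hb ≠ ⊤ := by
  obtain ⟨S, T, hST⟩ : ∃ S T, φ S T ≠ 0 := by
    by_contra! h
    exact hφ₀ (funext₂ h)
  intro htop
  have h := (D.mem_radical b).1 (htop ▸ Submodule.mem_top : b S ∈ D.radical b hφ hb) (b T)
  exact hST (by simpa [Finsupp.single_apply] using h)

theorem exists_toBilin_ne_zero_of_notMem_radical {x : W} (hx : x ∉ D.radical b hφ hb) :
    ∃ T, toBilin b (of φ) x (b T) ≠ 0 := by
  by_contra! h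
  have hx₀ : toBilin b (of φ) x = 0 := b.ext h
  exact hx fun y => LinearMap.congr_fun hx₀ y

end CellRepresentation

end CellDatum

/-- let `R` be a field, `W = W(λ)` the cell representation of `A`
corresponding to `λ` (an `A`-module with `R`-basis `(C_S)_{S ∈ M(λ)}` on which
`a • C_S = Σ_{S'} r_a(S',S) • C_{S'}`), and let `φ` satisfy the conclusion of Lemma
1.1.3, with associated bilinear form `φ_λ(x,y) = Σ_{S,T} x_S · φ(S,T) · y_T` in basis
coordinates.  Then `rad(λ) = {x : φ_λ(x,y) = 0 for all y}` is an `A`-submodule of `W`,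
and if `φ ≠ 0` then `W/rad(λ)` is a simple `A`-module. -/
theorem rad_is_submodule_and_quotient_simple (R A Λ : Type*) [Field R] [Ring A]
    [Algebra R A] [PartialOrder Λ] (M : Λ → Type*) [∀ l, Fintype (M l)]
    (D : CellDatum R A Λ M) (l : Λ) (φ : M l → M l → R)
    (hφ : ∀ S₁ T₁ S₂ T₂ : M l,
      D.C l S₁ T₁ * D.C l S₂ T₂ - φ T₁ S₂ • D.C l S₁ T₂ ∈ D.Aless l)
    (W : Type*) [AddCommGroup W] [Module R W] [Module A W] [IsScalarTower R A W]
    (b : Module.Basis (M l) R W)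
    (hb : ∀ (a : A) (S : M l), a • b S = ∑ S' : M l, D.r a l S' S • b S') :
    ∃ rad : Submodule A W,
      (rad : Set W) = {x : W | ∀ y : W,
        (∑ S : M l, ∑ T : M l, b.repr x S * φ S T * b.repr y T) = 0} ∧
      (φ ≠ 0 → IsSimpleModule A (W ⧸ rad)) := by
  classical
  have hcell : D.IsCellForm l φ := fun S₁ T₁ S₂ T₂ => SModEq.sub_mem.2 (hφ S₁ T₁ S₂ T₂)
  have hrep : D.IsCellRepresentation l b := hb
  refine ⟨D.radical b hcell hrep, by ext; simp [CellDatum.mem_radical], fun hφ₀ => ?_⟩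
  refine Submodule.isSimpleModule_quotient_of_span_singleton_eq_top (D.radical_ne_top b hφ₀)
    fun x hx => ?_
  obtain ⟨T, hT⟩ := D.exists_toBilin_ne_zero_of_notMem_radical b hx
  exact D.span_singleton_eq_top_of_isUnit b hcell hrep hT.isUnit
end
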